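/- Define observables on ℂ²⊗ℂ²: A₀ = σ_Z, A₁ = σ_X, B₀ = (α σ_X + σ_Z)/√(1+α²), B₁ = (-α σ_X + σ_Z)/√(1+α²). Then for Ω_α = ((1+α)/2)|Φ⁺⟩⟨Φ⁺| + ((1-α)/2)|Φ⁻⟩⟨Φ⁻|, the CHSH quantity Tr((A₀⊗B₀ + A₀⊗B₁ + A₁⊗B₀ - A₁⊗B₁)·Ω_α) equals 2√(1+α²). -/
import Mathlib


open Matrix Kronecker

/-- The Bell state |Φ⁺⟩ = (|00⟩ + |11⟩)/√2. -/
noncomputable def phiPlus : (Fin 2 × Fin 2) → ℂ :=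
  fun p => if p.1 = p.2 then ((1 / Real.sqrt 2 : ℝ) : ℂ) else 0

/-- The Bell state |Φ⁻⟩ = (|00⟩ - |11⟩)/√2. -/
noncomputable def phiMinus : (Fin 2 × Fin 2) → ℂ :=
  fun p => if p = (0, 0) then ((1 / Real.sqrt 2 : ℝ) : ℂ)
           else if p = (1, 1) then -((1 / Real.sqrt 2 : ℝ) : ℂ) else 0

/-- Rank-one projector |v⟩⟨v|. -/
noncomputable def projOf (v : (Fin 2 × Fin 2) → ℂ) :
    Matrix (Fin 2 × Fin 2) (Fin 2 × Fin 2) ℂ :=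
  Matrix.vecMulVec v (star v)

/-- Ω_α = ((1+α)/2)|Φ⁺⟩⟨Φ⁺| + ((1-α)/2)|Φ⁻⟩⟨Φ⁻|. -/
noncomputable def OmegaState (α : ℝ) : Matrix (Fin 2 × Fin 2) (Fin 2 × Fin 2) ℂ :=
  (((1 + α) / 2 : ℝ) : ℂ) • projOf phiPlus + (((1 - α) / 2 : ℝ) : ℂ) • projOf phiMinus

def sigmaX : Matrix (Fin 2) (Fin 2) ℂ := !![0, 1; 1, 0]
def sigmaZ : Matrix (Fin 2) (Fin 2) ℂ := !![1, 0; 0, -1]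

theorem stmt_13 (α : ℝ) (hα : α ∈ Set.Icc (0 : ℝ) 1) :
    let A₀ := sigmaZ
    let A₁ := sigmaX
    let B₀ := ((1 / Real.sqrt (1 + α ^ 2) : ℝ) : ℂ) • ((α : ℂ) • sigmaX + sigmaZ)
    let B₁ := ((1 / Real.sqrt (1 + α ^ 2) : ℝ) : ℂ) • (-(α : ℂ) • sigmaX + sigmaZ)
    Matrix.trace ((A₀ ⊗ₖ B₀ + A₀ ⊗ₖ B₁ + A₁ ⊗ₖ B₀ - A₁ ⊗ₖ B₁) * OmegaState α)
      = ((2 * Real.sqrt (1 + α ^ 2) : ℝ) : ℂ) := by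
  intro A₀ A₁ B₀ B₁
  have h1 : (0:ℝ) < 1 + α ^ 2 := by positivity
  have hs : Real.sqrt (1 + α ^ 2) > 0 := Real.sqrt_pos.mpr h1
  have hs2 : Real.sqrt (1 + α ^ 2) * Real.sqrt (1 + α ^ 2) = 1 + α ^ 2 :=
    Real.mul_self_sqrt (le_of_lt h1)
  have h2 : Real.sqrt 2 * Real.sqrt 2 = 2 := Real.mul_self_sqrt (by norm_num)
  simp only [A₀, A₁, B₀, B₁, Matrix.trace, Matrix.diag, Fintype.sum_prod_type,
    Fin.sum_univ_two, Matrix.mul_apply, OmegaState, projOf, phiPlus, phiMinus,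
    sigmaX, sigmaZ, Matrix.kroneckerMap_apply, Matrix.add_apply, Matrix.sub_apply,
    Matrix.smul_apply, Matrix.vecMulVec_apply, Pi.star_apply, Matrix.cons_val',
    Matrix.cons_val_zero, Matrix.cons_val_one, Matrix.head_cons, Matrix.head_fin_const,
    Matrix.empty_val', Matrix.cons_val_fin_one]
  norm_num [Complex.ext_iff, Complex.ofReal_re, Complex.ofReal_im]
  field_simp
  ring_nf
  nlinarith [hs2, h2, hs.le]
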